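/- Let p > 2 be a prime, ξ a primitive element of F_p, and let f be the unique polynomial over F_p of degree at most p−1 with f(0) = 0 and f(ξ^i) = i+1 for i = 0, 1, …, p−2. Let α, β, γ, δ ∈ F_p with αδ ≠ βγ and γ ≠ 0, and let N be the number of c ∈ F_p with γc + δ ≠ 0 and f(c) = (αc + β)/(γc + δ). Then (N − 1)^2 ≤ 4(p−2). -/

import Mathlib

open Polynomial Finset

/-- The Carlitz composition `P_n` over a field with `q` elements, built from
the constants `c 0, c 1, …, c (n+1)`:
`P_n(x) = (⋯((c_0 x + c_1)^{q-2} + c_2)^{q-2} ⋯ + c_n)^{q-2} + c_{n+1}`. -/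
def carlitzAux {F : Type*} [Field F] (q : ℕ) (c : ℕ → F) : ℕ → F → F
  | 0 => fun x => c 0 * x + c 1
  | n + 1 => fun x => (carlitzAux q c n x) ^ (q - 2) + c (n + 2)

/-- `f` agrees (as a map) with a Carlitz composition `P_n` with `n` inversions,
where `c 0 ≠ 0` and `c i ≠ 0` for `2 ≤ i ≤ n`. -/
def IsCarlitzForm {F : Type*} [Field F] [Fintype F] (f : F → F) (n : ℕ) : Prop :=
  ∃ c : ℕ → F, c 0 ≠ 0 ∧ (∀ i, 2 ≤ i → i ≤ n → c i ≠ 0) ∧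
    ∀ x, f x = carlitzAux (Fintype.card F) c n x

/-- The Carlitz rank of a map `f`: the smallest `n` such that `f` agrees with a
Carlitz composition `P_n`. -/
noncomputable def carlitzRank {F : Type*} [Field F] [Fintype F] (f : F → F) : ℕ :=
  sInf {n | IsCarlitzForm f n}

/-- `f` is the `r`-th order cyclotomic mapping of index `ℓ` with respect to the
primitive element `ξ` and coefficients `a 0, …, a (ℓ-1)`: it maps `0` to `0` and
`x` to `a i * x ^ r` for `x` in the cyclotomic coset `C_i = ξ^i C_0`, where
`C_0` is the set of nonzero `ℓ`-th powers. -/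
def IsCycMap {F : Type*} [Field F] (ℓ r : ℕ) (ξ : F) (a : ℕ → F) (f : F → F) : Prop :=
  f 0 = 0 ∧ (∀ i < ℓ, a i ≠ 0) ∧
    ∀ i < ℓ, ∀ y : F, y ≠ 0 → f (ξ ^ i * y ^ ℓ) = a i * (ξ ^ i * y ^ ℓ) ^ r

/-- The index `Ind(f)` of a map `f` with `f 0 = 0`: the smallest divisor `ℓ` of
`q - 1` such that `f` is an `r`-th order cyclotomic mapping of index `ℓ` for some
positive `r`, some primitive element `ξ` and some nonzero coefficients. -/
noncomputable def cycIndex {F : Type*} [Field F] [Fintype F] (f : F → F) : ℕ :=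
  sInf {ℓ | ℓ ∣ Fintype.card F - 1 ∧ ∃ r, 1 ≤ r ∧ ∃ ξ : F,
    orderOf ξ = Fintype.card F - 1 ∧ ∃ a : ℕ → F, IsCycMap ℓ r ξ a f}

/-- The linearity `L(f) = max_{a ≠ 0} |{c : f c = a c}|`. -/
def linearity {F : Type*} [Field F] [Fintype F] [DecidableEq F] (f : F → F) : ℕ :=
  (Finset.univ.erase (0 : F)).sup
    (fun a => (Finset.univ.filter (fun c => f c = a * c)).card)

/-- The invertibility `I(f) = max_{c ≠ 0} |{x ≠ 0 : f x = c / x}|`. -/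
def invertibility {F : Type*} [Field F] [Fintype F] [DecidableEq F] (f : F → F) : ℕ :=
  (Finset.univ.erase (0 : F)).sup
    (fun c => ((Finset.univ.erase (0 : F)).filter (fun x => f x = c / x)).card)

/-!
A nonzero `c` is `ξ ^ i` with `i < p - 1`, and there `f c = i + 1`, so `c` is a solution iff
`ξ ^ i * (γ * (i + 1) - α) = β - δ * (i + 1)`: the point `(i + 1, ξ ^ i)` lies on the graph of the
Möbius map `x ↦ (β - δ x) / (γ x - α)`. For solution exponents `i ≤ j`, the sum `σ = i + j` fixes
both `x + x'` and `y * y' = ξ ^ σ`, and on a Möbius graph these determine the pair `{x, x'}` unless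
`ξ ^ σ * γ ^ 2 = δ ^ 2` and `γ * δ * (σ + 2) = α * δ + β * γ`. These two conditions fix `σ` modulo
`p - 1` and modulo `p`, so at most one `σ < 2p - 3` is exceptional. Sorting the `n (n + 1) / 2`
pairs `i ≤ j` of the `n` solution exponents by their sum, the exceptional sum carries at most
`(n + 1) / 2` of them and every other sum at most one; hence `n ^ 2 ≤ 4p - 7`, and equality is
impossible for odd `p`. Finally `N ≤ n + 1`.
-/

section Mobius
variable {K : Type*} [Field K] {α β γ δ : K}

theorem mobius_eq_div_iff (hdet : α * δ ≠ β * γ) {c x : K} :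
    (γ * c + δ ≠ 0 ∧ x = (α * c + β) / (γ * c + δ)) ↔ c * (γ * x - α) = β - δ * x := by
  constructor
  · rintro ⟨hden, hx⟩
    rw [eq_div_iff hden] at hx
    linear_combination hx
  · intro h
    have hden : γ * c + δ ≠ 0 := by
      intro hden
      have hnum : α * c + β = 0 := by linear_combination -h + x * hden
      exact hdet (by linear_combination α * hden - γ * hnum)
    exact ⟨hden, by rw [eq_div_iff hden]; linear_combination h⟩

theorem mul_mul_eq_of_mobius {x x' y y' : K}
    (hx : y * (γ * x - α) = β - δ * x) (hx' : y' * (γ * x' - α) = β - δ * x') :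
    y * y' * ((γ * x - α) * (γ * x' - α)) = (β - δ * x) * (β - δ * x') := by
  linear_combination y' * (γ * x' - α) * hx + (β - δ * x) * hx'

theorem eq_or_eq_or_mul_mul_sq_eq {x x' w w' y y' z z' : K}
    (hx : y * (γ * x - α) = β - δ * x) (hx' : y' * (γ * x' - α) = β - δ * x')
    (hw : z * (γ * w - α) = β - δ * w) (hw' : z' * (γ * w' - α) = β - δ * w')
    (hsum : w + w' = x + x') (hprod : z * z' = y * y') :
    w = x ∨ w = x' ∨ y * y' * γ ^ 2 = δ ^ 2 := by
  obtain rfl : w' = x + x' - w := by linear_combination hsum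
  have key : (y * y' * γ ^ 2 - δ ^ 2) * ((w - x) * (w - x')) = 0 := by
    linear_combination mul_mul_eq_of_mobius hx hx' - mul_mul_eq_of_mobius hw hw'
      + ((γ * w - α) * (γ * (x + x' - w) - α)) * hprod
  rcases mul_eq_zero.mp key with h | h
  · exact .inr (.inr (sub_eq_zero.mp h))
  rcases mul_eq_zero.mp h with h | h
  · exact .inl (sub_eq_zero.mp h)
  · exact .inr (.inl (sub_eq_zero.mp h))

theorem sum_eq_of_mul_mul_sq_eq (hdet : α * δ ≠ β * γ) {x x' y y' : K}
    (hx : y * (γ * x - α) = β - δ * x) (hx' : y' * (γ * x' - α) = β - δ * x')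
    (hsq : y * y' * γ ^ 2 = δ ^ 2) : γ * δ * (x + x') = α * δ + β * γ := by
  have key : (α * δ - β * γ) * (α * δ + β * γ - γ * δ * (x + x')) = 0 := by
    linear_combination γ ^ 2 * mul_mul_eq_of_mobius hx hx' - ((γ * x - α) * (γ * x' - α)) * hsq
  rcases mul_eq_zero.mp key with h | h
  · exact absurd (sub_eq_zero.mp h) hdet
  · linear_combination -h

end Mobius

def pairSum (z : Sym2 ℕ) : ℕ := Sym2.lift ⟨(· + ·), add_comm⟩ z

@[simp] theorem pairSum_mk (a b : ℕ) : pairSum s(a, b) = a + b := rfl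

def sumFiber (I : Finset ℕ) (σ : ℕ) : Finset (Sym2 ℕ) := {z ∈ I.sym2 | pairSum z = σ}

theorem mk_mem_sumFiber {I : Finset ℕ} {σ a b : ℕ} :
    s(a, b) ∈ sumFiber I σ ↔ a ∈ I ∧ b ∈ I ∧ a + b = σ := by
  simp [sumFiber, and_assoc]

theorem two_mul_card_sumFiber_le (I : Finset ℕ) (σ : ℕ) : 2 * #(sumFiber I σ) ≤ #I + 1 := by
  set F := sumFiber I σ
  have hmem : ∀ z ∈ F, z.inf ∈ I ∧ z.sup ∈ I ∧ z.inf + z.sup = σ := by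
    intro z hz
    induction z using Sym2.ind with
    | h a b =>
      obtain ⟨ha, hb, hab⟩ := mk_mem_sumFiber.mp hz
      exact ⟨by rcases min_choice a b with h | h <;> rw [Sym2.inf_mk, h] <;> assumption,
        by rcases max_choice a b with h | h <;> rw [Sym2.sup_mk, h] <;> assumption,
        by simpa [min_add_max] using hab⟩
  have hinj_inf : Set.InjOn Sym2.inf (F : Set (Sym2 ℕ)) := by
    intro z hz w hw h
    have := (hmem z hz).2.2; have := (hmem w hw).2.2
    exact Sym2.inf_eq_inf_and_sup_eq_sup.mp ⟨h, by omega⟩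
  have hinj_sup : Set.InjOn Sym2.sup (F : Set (Sym2 ℕ)) := by
    intro z hz w hw h
    have := (hmem z hz).2.2; have := (hmem w hw).2.2
    exact Sym2.inf_eq_inf_and_sup_eq_sup.mp ⟨by omega, h⟩
  have hsub : F.image Sym2.inf ∪ F.image Sym2.sup ⊆ I := by
    intro a ha
    simp only [mem_union, mem_image] at ha
    rcases ha with ⟨z, hz, rfl⟩ | ⟨z, hz, rfl⟩
    exacts [(hmem z hz).1, (hmem z hz).2.1]
  -- a common value `a = z.inf = w.sup` has `2 * a ≤ σ ≤ 2 * a`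
  have hinter : #(F.image Sym2.inf ∩ F.image Sym2.sup) ≤ 1 := by
    have half : ∀ a ∈ F.image Sym2.inf ∩ F.image Sym2.sup, 2 * a = σ := by
      intro a ha
      simp only [mem_inter, mem_image] at ha
      obtain ⟨⟨z, hz, rfl⟩, ⟨w, hw, hwa⟩⟩ := ha
      have := (hmem z hz).2.2; have := (hmem w hw).2.2
      have := z.inf_le_sup; have := w.inf_le_sup
      omega
    exact card_le_one.mpr fun a ha b hb => by have := half a ha; have := half b hb; omega
  have := card_union_add_card_inter (F.image Sym2.inf) (F.image Sym2.sup)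
  have := card_le_card hsub
  rw [card_image_of_injOn hinj_inf, card_image_of_injOn hinj_sup] at *
  omega

theorem sum_card_sumFiber {I : Finset ℕ} {m : ℕ} (hI : I ⊆ range m) :
    ∑ σ ∈ range (2 * m - 1), #(sumFiber I σ) = (#I + 1).choose 2 := by
  rw [← card_sym2]
  refine (card_eq_sum_card_fiberwise fun z hz => ?_).symm
  induction z using Sym2.ind with
  | h a b =>
    rw [mem_coe, mk_mem_sym2_iff] at hz
    have ha := mem_range.mp (hI hz.1)
    have hb := mem_range.mp (hI hz.2)
    simp only [coe_range, Set.mem_Iio, pairSum_mk]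
    omega

section DiscreteLog
variable {p : ℕ} {ξ α β γ δ : ZMod p}

def solutionExponents (ξ α β γ δ : ZMod p) : Finset ℕ :=
  {i ∈ range (p - 1) | ξ ^ i * (γ * (i + 1) - α) = β - δ * (i + 1)}

def IsExceptionalSum (ξ α β γ δ : ZMod p) (σ : ℕ) : Prop :=
  ξ ^ σ * γ ^ 2 = δ ^ 2 ∧ γ * δ * (σ + 2) = α * δ + β * γ

theorem mem_solutionExponents {i : ℕ} : i ∈ solutionExponents ξ α β γ δ ↔
    i < p - 1 ∧ ξ ^ i * (γ * (i + 1) - α) = β - δ * (i + 1) := by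
  simp [solutionExponents]

variable [Fact p.Prime]

theorem card_sumFiber_le_one_of_ne {σ : ℕ} (hσ : ξ ^ σ * γ ^ 2 ≠ δ ^ 2) :
    #(sumFiber (solutionExponents ξ α β γ δ) σ) ≤ 1 := by
  refine card_le_one.mpr fun z hz w hw => ?_
  induction z using Sym2.ind with | h i j =>
  induction w using Sym2.ind with | h k l =>
  obtain ⟨hi, hj, hij⟩ := mk_mem_sumFiber.mp hz
  obtain ⟨hk, hl, hkl⟩ := mk_mem_sumFiber.mp hw
  obtain ⟨hip, hi⟩ := mem_solutionExponents.mp hi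
  obtain ⟨hjp, hj⟩ := mem_solutionExponents.mp hj
  obtain ⟨hkp, hk⟩ := mem_solutionExponents.mp hk
  obtain ⟨hlp, hl⟩ := mem_solutionExponents.mp hl
  have hsum : ((k : ZMod p) + 1) + ((l : ZMod p) + 1) = ((i : ZMod p) + 1) + ((j : ZMod p) + 1) := by
    have := congrArg (Nat.cast : ℕ → ZMod p) (hkl.trans hij.symm)
    push_cast at this
    linear_combination this
  have hprod : ξ ^ k * ξ ^ l = ξ ^ i * ξ ^ j := by rw [← pow_add, ← pow_add, hkl, hij]
  have hp : p - 1 < p := Nat.sub_one_lt (Fact.out : p.Prime).ne_zero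
  have cast_inj : ∀ {a b : ℕ}, a < p → b < p → (a : ZMod p) + 1 = b + 1 → a = b :=
    fun ha hb h => ((ZMod.natCast_eq_natCast_iff _ _ _).mp (add_right_cancel h)).eq_of_lt_of_lt ha hb
  rcases eq_or_eq_or_mul_mul_sq_eq hi hj hk hl hsum hprod with h | h | h
  · have := cast_inj (by omega) (by omega) h
    exact Sym2.eq_iff.mpr (by omega)
  · have := cast_inj (by omega) (by omega) h
    exact Sym2.eq_iff.mpr (by omega)
  · rw [← pow_add, hij] at h
    exact absurd h hσ

theorem isExceptionalSum_of_mem_sumFiber (hdet : α * δ ≠ β * γ) {σ : ℕ} {z : Sym2 ℕ}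
    (hσ : ξ ^ σ * γ ^ 2 = δ ^ 2) (hz : z ∈ sumFiber (solutionExponents ξ α β γ δ) σ) :
    IsExceptionalSum ξ α β γ δ σ := by
  induction z using Sym2.ind with | h i j =>
  obtain ⟨hi, hj, rfl⟩ := mk_mem_sumFiber.mp hz
  rw [mem_solutionExponents] at hi hj
  refine ⟨hσ, ?_⟩
  have := sum_eq_of_mul_mul_sq_eq hdet hi.2 hj.2 (by rwa [← pow_add])
  push_cast
  linear_combination this

theorem sumFiber_eq_empty (hdet : α * δ ≠ β * γ) {σ : ℕ} (hσ : ξ ^ σ * γ ^ 2 = δ ^ 2)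
    (hexc : ¬IsExceptionalSum ξ α β γ δ σ) :
    sumFiber (solutionExponents ξ α β γ δ) σ = ∅ :=
  eq_empty_of_forall_notMem fun _ hz => hexc (isExceptionalSum_of_mem_sumFiber hdet hσ hz)

theorem card_sumFiber_le_one (hdet : α * δ ≠ β * γ) {σ : ℕ}
    (hexc : ¬IsExceptionalSum ξ α β γ δ σ) :
    #(sumFiber (solutionExponents ξ α β γ δ) σ) ≤ 1 := by
  by_cases hσ : ξ ^ σ * γ ^ 2 = δ ^ 2
  · simp [sumFiber_eq_empty hdet hσ hexc]
  · exact card_sumFiber_le_one_of_ne hσ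

theorem IsExceptionalSum.eq (hξ : IsPrimitiveRoot ξ (p - 1)) (hdet : α * δ ≠ β * γ)
    {σ τ : ℕ} (hσ : IsExceptionalSum ξ α β γ δ σ) (hτ : IsExceptionalSum ξ α β γ δ τ)
    (hσp : σ < p * (p - 1)) (hτp : τ < p * (p - 1)) : σ = τ := by
  have hp1 : p - 1 ≠ 0 := (Fact.out : p.Prime).pred_pos.ne'
  have hξ0 : ξ ≠ 0 := hξ.ne_zero hp1
  have hδ : δ ≠ 0 := by
    rintro rfl
    have hγ : γ = 0 := by simpa [hξ0] using hσ.1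
    simp [hγ] at hdet
  have hγ : γ ≠ 0 := by
    rintro rfl
    exact hδ (by simpa using hσ.1.symm)
  have hmod : σ ≡ τ [MOD p - 1] := by
    rw [hξ.eq_orderOf, ← (hξ.isOfFinOrder hp1).pow_eq_pow_iff_modEq]
    exact mul_right_cancel₀ (pow_ne_zero 2 hγ) (hσ.1.trans hτ.1.symm)
  have hmod' : σ ≡ τ [MOD p] := by
    rw [← ZMod.natCast_eq_natCast_iff]
    have := mul_left_cancel₀ (mul_ne_zero hγ hδ) (hσ.2.trans hτ.2.symm)
    exact add_right_cancel this
  have hcop : Nat.Coprime p (p - 1) :=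
    (Nat.coprime_self_sub_right (Fact.out : p.Prime).one_le).mpr (Nat.coprime_one_right p)
  exact ((Nat.modEq_and_modEq_iff_modEq_mul hcop).mp ⟨hmod', hmod⟩).eq_of_lt_of_lt hσp hτp

theorem exists_forall_ne_not_isExceptionalSum (hξ : IsPrimitiveRoot ξ (p - 1))
    (hdet : α * δ ≠ β * γ) {m : ℕ} (hm : m ≤ p * (p - 1)) (hm0 : 0 < m) :
    ∃ σ₀ < m, ∀ σ < m, σ ≠ σ₀ → ¬IsExceptionalSum ξ α β γ δ σ := by
  by_cases h : ∃ σ₀ < m, IsExceptionalSum ξ α β γ δ σ₀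
  · obtain ⟨σ₀, hσ₀, h₀⟩ := h
    exact ⟨σ₀, hσ₀, fun σ hσ hne hexc => hne (hexc.eq hξ hdet h₀ (by omega) (by omega))⟩
  · push Not at h
    exact ⟨0, hm0, fun σ hσ _ => h σ hσ⟩

theorem sq_card_solutionExponents_add_seven_le (hξ : IsPrimitiveRoot ξ (p - 1))
    (hdet : α * δ ≠ β * γ) : #(solutionExponents ξ α β γ δ) ^ 2 + 7 ≤ 4 * p := by
  set I := solutionExponents ξ α β γ δ
  set W := range (2 * (p - 1) - 1)
  have hp := (Fact.out : p.Prime).two_le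
  have hW : #W + 3 = 2 * p := by simp only [W, card_range]; omega
  obtain ⟨σ₀, hσ₀, hexc⟩ := exists_forall_ne_not_isExceptionalSum hξ hdet
    (m := 2 * (p - 1) - 1) (by have := Nat.mul_le_mul_right (p - 1) hp; omega) (by omega)
  replace hσ₀ : σ₀ ∈ W := mem_range.mpr hσ₀
  have hsum : ∑ σ ∈ W, #(sumFiber I σ) = (#I + 1).choose 2 := sum_card_sumFiber (filter_subset _ _)
  have hchoose : (#I + 1) * #I = (#I + 1).choose 2 * 2 := by
    simpa using Nat.add_one_mul_choose_eq #I 1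
  have hrest : ∑ σ ∈ W.erase σ₀, #(sumFiber I σ) ≤ #(W.erase σ₀) := by
    simpa using sum_le_card_nsmul (W.erase σ₀) _ 1 fun σ hσ =>
      card_sumFiber_le_one hdet (hexc σ (mem_range.mp (mem_of_mem_erase hσ)) (ne_of_mem_erase hσ))
  have hσ₀le := two_mul_card_sumFiber_le I σ₀
  rw [← add_sum_erase W _ hσ₀] at hsum
  rw [card_erase_of_mem hσ₀] at hrest
  have key : (#I + 1) * #I + 1 ≤ #I + 2 * #W := by omega
  nlinarith

theorem card_erase_zero_filter_mobius_eq (hξ : IsPrimitiveRoot ξ (p - 1))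
    (hdet : α * δ ≠ β * γ) {g : ZMod p → ZMod p} (hg : ∀ i < p - 1, g (ξ ^ i) = i + 1) :
    #(({c | γ * c + δ ≠ 0 ∧ g c = (α * c + β) / (γ * c + δ)} : Finset (ZMod p)).erase 0) =
      #(solutionExponents ξ α β γ δ) := by
  have hp1 : NeZero (p - 1) := ⟨(Fact.out : p.Prime).pred_pos.ne'⟩
  have himage : ({c | γ * c + δ ≠ 0 ∧ g c = (α * c + β) / (γ * c + δ)} : Finset (ZMod p)).erase 0
      = (solutionExponents ξ α β γ δ).image (ξ ^ ·) := by
    ext c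
    simp only [mem_erase, mem_filter, mem_univ, true_and, mem_image, mem_solutionExponents]
    constructor
    · rintro ⟨hc, hsol⟩
      obtain ⟨i, hi, rfl⟩ := hξ.eq_pow_of_pow_eq_one (ZMod.pow_card_sub_one_eq_one hc)
      rw [hg i hi, mobius_eq_div_iff hdet] at hsol
      exact ⟨i, ⟨hi, hsol⟩, rfl⟩
    · rintro ⟨i, ⟨hi, hsol⟩, rfl⟩
      rw [hg i hi, mobius_eq_div_iff hdet]
      exact ⟨pow_ne_zero _ (hξ.ne_zero (NeZero.ne _)), hsol⟩
  rw [himage, card_image_of_injOn]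
  intro i hi j hj h
  exact hξ.pow_inj (mem_solutionExponents.mp hi).1 (mem_solutionExponents.mp hj).1 h

end DiscreteLog

theorem sq_add_eight_le_of_sq_add_seven_le {n p : ℕ} (hp : Odd p) (h : n ^ 2 + 7 ≤ 4 * p) :
    n ^ 2 + 8 ≤ 4 * p := by
  refine lt_of_le_of_ne h fun heq => ?_
  obtain ⟨m, rfl⟩ := hp
  rcases Nat.even_or_odd' n with ⟨k, rfl | rfl⟩
  · ring_nf at heq
    omega
  · obtain ⟨r, hr⟩ := Nat.even_mul_succ_self k
    ring_nf at heq hr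
    omega

theorem stmt16_general {p : ℕ} [Fact p.Prime] (hp : 2 < p) (ξ : ZMod p)
    (hξ : orderOf ξ = p - 1) (f : Polynomial (ZMod p))
    (hval : ∀ i : ℕ, i ≤ p - 2 → f.eval (ξ ^ i) = (i : ZMod p) + 1)
    (α β γ δ : ZMod p) (hdet : α * δ ≠ β * γ) :
    (((Finset.univ.filter
      (fun c : ZMod p => γ * c + δ ≠ 0 ∧ f.eval c = (α * c + β) / (γ * c + δ))).card : ℤ) - 1) ^ 2
      ≤ 4 * ((p : ℤ) - 2) := by
  have hprim : IsPrimitiveRoot ξ (p - 1) := hξ ▸ IsPrimitiveRoot.orderOf ξ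
  set S := Finset.univ.filter
    (fun c : ZMod p => γ * c + δ ≠ 0 ∧ f.eval c = (α * c + β) / (γ * c + δ))
  have hn : #(S.erase 0) = #(solutionExponents ξ α β γ δ) :=
    card_erase_zero_filter_mobius_eq hprim hdet fun i hi => hval i (by omega)
  have hsq : #(S.erase 0) ^ 2 + 8 ≤ 4 * p := hn ▸ sq_add_eight_le_of_sq_add_seven_le
    ((Fact.out : p.Prime).odd_of_ne_two hp.ne') (sq_card_solutionExponents_add_seven_le hprim hdet)
  have hlow : #S - 1 ≤ #(S.erase 0) := pred_card_le_card_erase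
  rcases Nat.eq_zero_or_pos #S with h | h
  · rw [h]
    push_cast
    omega
  · have hle : (#S : ℤ) - 1 ≤ #(S.erase 0) := by omega
    have hnonneg : (0 : ℤ) ≤ #S - 1 := by omega
    have hsqZ : ((#(S.erase 0) : ℕ) : ℤ) ^ 2 + 8 ≤ 4 * p := by exact_mod_cast hsq
    nlinarith

/-- For the discrete logarithm polynomial `f` over `F_p` (`p > 2` prime)
and `α, β, γ, δ ∈ F_p` with `αδ ≠ βγ` and `γ ≠ 0`, the number `N` of `c ∈ F_p` with
`γc+δ ≠ 0` and `f(c) = (αc+β)/(γc+δ)` satisfies `(N−1)^2 ≤ 4(p−2)`. -/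
theorem stmt16 {p : ℕ} [Fact p.Prime] (hp : 2 < p) (ξ : ZMod p)
    (hξ : orderOf ξ = p - 1) (f : Polynomial (ZMod p))
    (hdeg : f.degree ≤ ((p - 1 : ℕ) : WithBot ℕ)) (h0 : f.eval 0 = 0)
    (hval : ∀ i : ℕ, i ≤ p - 2 → f.eval (ξ ^ i) = (i : ZMod p) + 1)
    (α β γ δ : ZMod p) (hdet : α * δ ≠ β * γ) (hγ : γ ≠ 0) :
    (((Finset.univ.filter
      (fun c : ZMod p => γ * c + δ ≠ 0 ∧ f.eval c = (α * c + β) / (γ * c + δ))).card : ℤ) - 1) ^ 2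
      ≤ 4 * ((p : ℤ) - 2) :=
  stmt16_general hp ξ hξ f hval α β γ δ hdet
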